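/- Let C > 0, σ₀ > 0, λ₀ > 0 and let q be the associated function. Then for all 0 ≤ t ≤ T and all λ with 0 < λ < λ₀: ∫_t^T e^{−λs}·q(s−t) ds ≤ (e^{−λt}/(√π·C·σ₀))·(1/√λ₀ + √λ₀/(λ + λ₀)). -/

import Mathlib

/-!
Substituting `s = t + u` pulls out `e^{-λt}` and leaves `∫_0^{T-t} e^{-λu} q(u) du`, which is at
most the whole Laplace transform `∫_0^∞ e^{-λu} q(u) du` because the integrand is nonnegative.
Split at `a = 1/(2λ₀)`. On `(0, a]` we use `e^{-λu} ≤ 1` and `q(u) = u^{-1/2}/(√(2π) C σ₀)`,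
whose integral is `1/(√λ₀ √π C σ₀)`. On `(a, ∞)` the integrand is a multiple of `e^{-(λ+λ₀)u}`,
with integral `e^{-λa} q(a)/(λ+λ₀) ≤ q(a)/(λ+λ₀)`, and `q(a) = √λ₀/(√π C σ₀)`.
-/

noncomputable section

/-- The function `q = q^{κ,lam₀,σ₀}`: `q(t) = 1/(√(2πt)·C·σ₀)` for `t < 1/(2lam₀)` and
`q(t) = (√(lam₀e)/(√π·C·σ₀))·e^{−lam₀ t}` for `t ≥ 1/(2lam₀)`. -/
def qfun (C σ₀ lam₀ : ℝ) (t : ℝ) : ℝ :=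
  if t < 1 / (2 * lam₀) then 1 / (Real.sqrt (2 * Real.pi * t) * C * σ₀)
  else Real.sqrt (lam₀ * Real.exp 1) / (Real.sqrt Real.pi * C * σ₀) * Real.exp (-lam₀ * t)

open MeasureTheory Set Real

section
variable {C σ₀ lam₀ lam : ℝ}

lemma qfun_nonneg (hC : 0 ≤ C) (hσ₀ : 0 ≤ σ₀) (u : ℝ) : 0 ≤ qfun C σ₀ lam₀ u := by
  unfold qfun
  split_ifs <;> positivity

@[fun_prop]
lemma measurable_qfun (C σ₀ lam₀ : ℝ) : Measurable (qfun C σ₀ lam₀) := by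
  unfold qfun
  exact Measurable.ite measurableSet_Iio (by fun_prop) (by fun_prop)

lemma qfun_of_le {u : ℝ} (h : 1 / (2 * lam₀) ≤ u) :
    qfun C σ₀ lam₀ u = √(lam₀ * exp 1) / (√π * C * σ₀) * exp (-lam₀ * u) := by
  rw [qfun, if_neg h.not_gt]

-- Both branches of `qfun` take this value at `1/(2λ₀)`, so `q` is continuous there.
lemma qfun_one_div_two_mul (hlam₀ : 0 < lam₀) :
    qfun C σ₀ lam₀ (1 / (2 * lam₀)) = √lam₀ / (√π * C * σ₀) := by
  rw [qfun_of_le le_rfl, sqrt_mul hlam₀.le, ← exp_half,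
    show -lam₀ * (1 / (2 * lam₀)) = -(1 / 2) by field_simp, mul_div_right_comm, mul_assoc,
    ← exp_add]
  norm_num

lemma qfun_eq_rpow (hlam₀ : 0 < lam₀) {u : ℝ} (hu : 0 < u) (h : u ≤ 1 / (2 * lam₀)) :
    qfun C σ₀ lam₀ u = (√(2 * π) * C * σ₀)⁻¹ * u ^ (-(1 / 2 : ℝ)) := by
  rw [rpow_neg hu.le, ← sqrt_eq_rpow]
  rcases h.lt_or_eq with h | rfl
  · rw [qfun, if_pos h, sqrt_mul (by positivity)]
    field_simp
  · rw [qfun_one_div_two_mul hlam₀, one_div, sqrt_inv, inv_inv, sqrt_mul zero_le_two,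
      sqrt_mul zero_le_two]
    field_simp

lemma integrableOn_qfun_Ioc (hlam₀ : 0 < lam₀) :
    IntegrableOn (qfun C σ₀ lam₀) (Ioc 0 (1 / (2 * lam₀))) := by
  have hrpow : IntegrableOn (fun u : ℝ => (√(2 * π) * C * σ₀)⁻¹ * u ^ (-(1 / 2 : ℝ)))
      (Ioc 0 (1 / (2 * lam₀))) :=
    (intervalIntegrable_iff_integrableOn_Ioc_of_le (by positivity)).1
      ((intervalIntegral.intervalIntegrable_rpow' (by norm_num)).const_mul _)
  exact hrpow.congr_fun (fun u hu => (qfun_eq_rpow hlam₀ hu.1 hu.2).symm) measurableSet_Ioc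

lemma integral_qfun_Ioc (hlam₀ : 0 < lam₀) :
    ∫ u in Ioc 0 (1 / (2 * lam₀)), qfun C σ₀ lam₀ u = 1 / √lam₀ / (√π * C * σ₀) := by
  rw [setIntegral_congr_fun measurableSet_Ioc (fun u hu => qfun_eq_rpow hlam₀ hu.1 hu.2),
    ← intervalIntegral.integral_of_le (by positivity), intervalIntegral.integral_const_mul,
    integral_rpow (Or.inl (by norm_num))]
  rw [show -(1 / 2 : ℝ) + 1 = 1 / 2 by norm_num, ← sqrt_eq_rpow, ← sqrt_eq_rpow, sqrt_zero,
    one_div (2 * lam₀), sqrt_inv, sqrt_mul zero_le_two, sqrt_mul zero_le_two]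
  field_simp
  rw [sq_sqrt zero_le_two]
  ring

lemma exp_mul_qfun_of_le {u : ℝ} (h : 1 / (2 * lam₀) ≤ u) :
    exp (-lam * u) * qfun C σ₀ lam₀ u =
      √(lam₀ * exp 1) / (√π * C * σ₀) * exp (-(lam + lam₀) * u) := by
  rw [qfun_of_le h, mul_left_comm, ← exp_add]
  ring_nf

lemma exp_mul_qfun_nonneg (hC : 0 ≤ C) (hσ₀ : 0 ≤ σ₀) (u : ℝ) :
    0 ≤ exp (-lam * u) * qfun C σ₀ lam₀ u :=
  mul_nonneg (exp_nonneg _) (qfun_nonneg hC hσ₀ u)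

lemma exp_mul_qfun_le_qfun (hC : 0 ≤ C) (hσ₀ : 0 ≤ σ₀) (hlam : 0 ≤ lam) {u : ℝ} (hu : 0 ≤ u) :
    exp (-lam * u) * qfun C σ₀ lam₀ u ≤ qfun C σ₀ lam₀ u :=
  mul_le_of_le_one_left (qfun_nonneg hC hσ₀ u) (exp_le_one_iff.2 (by nlinarith))

lemma integrableOn_exp_mul_qfun_Ioc (hC : 0 ≤ C) (hσ₀ : 0 ≤ σ₀) (hlam₀ : 0 < lam₀)
    (hlam : 0 ≤ lam) :
    IntegrableOn (fun u => exp (-lam * u) * qfun C σ₀ lam₀ u) (Ioc 0 (1 / (2 * lam₀))) := by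
  refine (integrableOn_qfun_Ioc (C := C) (σ₀ := σ₀) hlam₀).mono' (by fun_prop)
    (ae_restrict_of_forall_mem measurableSet_Ioc fun u hu => ?_)
  rw [norm_of_nonneg (exp_mul_qfun_nonneg hC hσ₀ u)]
  exact exp_mul_qfun_le_qfun hC hσ₀ hlam hu.1.le

lemma integrableOn_exp_mul_qfun_Ioi_of_le (hlam₀ : 0 < lam₀) (hlam : 0 ≤ lam) :
    IntegrableOn (fun u => exp (-lam * u) * qfun C σ₀ lam₀ u) (Ioi (1 / (2 * lam₀))) :=
  IntegrableOn.congr_fun ((integrableOn_exp_mul_Ioi (by linarith) _).const_mul _)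
    (fun _ hu => (exp_mul_qfun_of_le hu.le).symm) measurableSet_Ioi

lemma integral_exp_mul_qfun_Ioi_of_le (hC : 0 ≤ C) (hσ₀ : 0 ≤ σ₀) (hlam₀ : 0 < lam₀)
    (hlam : 0 ≤ lam) :
    ∫ u in Ioi (1 / (2 * lam₀)), exp (-lam * u) * qfun C σ₀ lam₀ u ≤
      √lam₀ / (lam + lam₀) / (√π * C * σ₀) := by
  have hμ : 0 < lam + lam₀ := by linarith
  rw [setIntegral_congr_fun measurableSet_Ioi (fun _ hu => exp_mul_qfun_of_le hu.le),
    integral_const_mul, integral_exp_mul_Ioi (neg_lt_zero.2 hμ), neg_div_neg_eq, ← mul_div_assoc,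
    ← exp_mul_qfun_of_le le_rfl]
  calc exp (-lam * (1 / (2 * lam₀))) * qfun C σ₀ lam₀ (1 / (2 * lam₀)) / (lam + lam₀)
      ≤ qfun C σ₀ lam₀ (1 / (2 * lam₀)) / (lam + lam₀) := by
        gcongr
        exact exp_mul_qfun_le_qfun hC hσ₀ hlam (by positivity)
    _ = √lam₀ / (lam + lam₀) / (√π * C * σ₀) := by
        rw [qfun_one_div_two_mul hlam₀, div_right_comm]

lemma integrableOn_exp_mul_qfun_Ioi (hC : 0 ≤ C) (hσ₀ : 0 ≤ σ₀) (hlam₀ : 0 < lam₀)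
    (hlam : 0 ≤ lam) :
    IntegrableOn (fun u => exp (-lam * u) * qfun C σ₀ lam₀ u) (Ioi 0) := by
  rw [← Ioc_union_Ioi_eq_Ioi (by positivity : (0 : ℝ) ≤ 1 / (2 * lam₀))]
  exact (integrableOn_exp_mul_qfun_Ioc hC hσ₀ hlam₀ hlam).union
    (integrableOn_exp_mul_qfun_Ioi_of_le hlam₀ hlam)

lemma integral_exp_mul_qfun_Ioi_le (hC : 0 ≤ C) (hσ₀ : 0 ≤ σ₀) (hlam₀ : 0 < lam₀)
    (hlam : 0 ≤ lam) :
    ∫ u in Ioi 0, exp (-lam * u) * qfun C σ₀ lam₀ u ≤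
      (1 / √lam₀ + √lam₀ / (lam + lam₀)) / (√π * C * σ₀) := by
  rw [← Ioc_union_Ioi_eq_Ioi (by positivity : (0 : ℝ) ≤ 1 / (2 * lam₀)),
    setIntegral_union Ioc_disjoint_Ioi_same measurableSet_Ioi
      (integrableOn_exp_mul_qfun_Ioc hC hσ₀ hlam₀ hlam)
      (integrableOn_exp_mul_qfun_Ioi_of_le hlam₀ hlam), add_div]
  gcongr ?_ + ?_
  · rw [← integral_qfun_Ioc hlam₀]
    exact setIntegral_mono_on (integrableOn_exp_mul_qfun_Ioc hC hσ₀ hlam₀ hlam)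
      (integrableOn_qfun_Ioc hlam₀) measurableSet_Ioc
      fun u hu => exp_mul_qfun_le_qfun hC hσ₀ hlam hu.1.le
  · exact integral_exp_mul_qfun_Ioi_of_le hC hσ₀ hlam₀ hlam

end

lemma intervalIntegral_exp_mul_comp_sub (f : ℝ → ℝ) (lam t T : ℝ) :
    ∫ s in t..T, exp (-lam * s) * f (s - t) =
      exp (-lam * t) * ∫ u in 0..T - t, exp (-lam * u) * f u := by
  rw [← intervalIntegral.integral_const_mul, ← sub_self t,
    ← intervalIntegral.integral_comp_sub_right]
  congr 1 with s
  rw [← mul_assoc, ← exp_add]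
  ring_nf

theorem stmt11_general (C σ₀ lam₀ : ℝ) (hC : 0 < C) (hσ₀ : 0 < σ₀) (hlam₀ : 0 < lam₀)
    (t T lam : ℝ) (htT : t ≤ T) (hlam0 : 0 < lam) :
    ∫ s in t..T, Real.exp (-lam * s) * qfun C σ₀ lam₀ (s - t) ≤
      Real.exp (-lam * t) / (Real.sqrt Real.pi * C * σ₀) *
        (1 / Real.sqrt lam₀ + Real.sqrt lam₀ / (lam + lam₀)) := by
  have hlaplace : ∫ u in 0..T - t, exp (-lam * u) * qfun C σ₀ lam₀ u ≤
      ∫ u in Ioi 0, exp (-lam * u) * qfun C σ₀ lam₀ u := by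
    rw [intervalIntegral.integral_of_le (sub_nonneg.2 htT)]
    exact setIntegral_mono_set (integrableOn_exp_mul_qfun_Ioi hC.le hσ₀.le hlam₀ hlam0.le)
      (ae_of_all _ fun u => exp_mul_qfun_nonneg hC.le hσ₀.le u)
      Ioc_subset_Ioi_self.eventuallyLE
  rw [intervalIntegral_exp_mul_comp_sub, div_mul_eq_mul_div, mul_div_assoc]
  gcongr
  exact hlaplace.trans (integral_exp_mul_qfun_Ioi_le hC.le hσ₀.le hlam₀ hlam0.le)

/-- `∫_t^T e^{−λs} q(s−t) ds ≤ (e^{−λt}/(√π C σ₀))(1/√lam₀ + √lam₀/(λ+lam₀))`. -/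
theorem stmt11 (C σ₀ lam₀ : ℝ) (hC : 0 < C) (hσ₀ : 0 < σ₀) (hlam₀ : 0 < lam₀)
    (t T lam : ℝ) (ht : 0 ≤ t) (htT : t ≤ T) (hlam0 : 0 < lam) (hlam : lam < lam₀) :
    ∫ s in t..T, Real.exp (-lam * s) * qfun C σ₀ lam₀ (s - t) ≤
      Real.exp (-lam * t) / (Real.sqrt Real.pi * C * σ₀) *
        (1 / Real.sqrt lam₀ + Real.sqrt lam₀ / (lam + lam₀)) :=
  stmt11_general C σ₀ lam₀ hC hσ₀ hlam₀ t T lam htT hlam0
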